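/- For the zero-cost-symbol case: if k(⋆) = 0 and k(x) > 0 for x ≠ ⋆, then max over input distributions P with E_P[k] > 0 of [I(P,Q) + D(P_Y∥Q(·|⋆))]/((1+β)E_P[k]) equals (1/(1+β)) · max_{x ≠ ⋆} D(Q(·|x)∥Q(·|⋆))/k(x). -/

import Mathlib

/-!
Integrating the chain rule `log (Q(y|x)/P_Y(y)) + log (P_Y(y)/Q(y|⋆)) = log (Q(y|x)/Q(y|⋆))`
against `P(x) Q(y|x)` shows that `I(P,Q) + D(P_Y ∥ Q(·|⋆))` is linear in `P`, equal to
`E_P[D(Q(·|x) ∥ Q(·|⋆))]`. A ratio of two expectations is at most the largest ratio of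
the integrands (the mediant inequality), and a point mass at a maximising `x ≠ ⋆` attains it;
`x = ⋆` contributes nothing since both its cost and its divergence vanish.
-/

open Finset

namespace DiscreteChannel

variable {X Y : Type*} [Fintype X] [Fintype Y]

def outputDist (P : X → ℝ) (Q : X → Y → ℝ) (y : Y) : ℝ := ∑ x, P x * Q x y

noncomputable def relEntropy (b : ℝ) (p q : Y → ℝ) : ℝ := ∑ y, p y * Real.logb b (p y / q y)

noncomputable def mutualInfo (b : ℝ) (P : X → ℝ) (Q : X → Y → ℝ) : ℝ :=
  ∑ x, ∑ y, P x * Q x y * Real.logb b (P x * Q x y / (P x * outputDist P Q y))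

theorem relEntropy_self (b : ℝ) (p : Y → ℝ) : relEntropy b p p = 0 := by
  refine sum_eq_zero fun y _ => ?_
  rcases eq_or_ne (p y) 0 with hp | hp
  · simp [hp]
  · simp [div_self hp]

theorem mul_logb_div_add_mul_logb_div {a q s r : ℝ} (b : ℝ) (ha : 0 ≤ a) (hq : 0 ≤ q)
    (hs : a * q ≤ s) (hr : r ≠ 0) :
    a * q * Real.logb b (a * q / (a * s)) + a * q * Real.logb b (s / r) =
      a * (q * Real.logb b (q / r)) := by
  rcases ha.eq_or_lt with rfl | ha
  · simp
  rcases hq.eq_or_lt with rfl | hq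
  · simp
  have hs : 0 < s := (mul_pos ha hq).trans_le hs
  have hchain : q / s * (s / r) = q / r := by field_simp
  rw [mul_div_mul_left _ _ ha.ne', ← mul_add, ← Real.logb_mul (by positivity)
    (div_ne_zero hs.ne' hr), hchain]
  ring

theorem relEntropy_outputDist (b : ℝ) (P : X → ℝ) (Q : X → Y → ℝ) (R : Y → ℝ) :
    relEntropy b (outputDist P Q) R =
      ∑ x, ∑ y, P x * Q x y * Real.logb b (outputDist P Q y / R y) := by
  rw [relEntropy, sum_comm]
  exact sum_congr rfl fun y _ => sum_mul ..

theorem mutualInfo_add_relEntropy_outputDist (b : ℝ) {P : X → ℝ} {Q : X → Y → ℝ}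
    {R : Y → ℝ} (hP : ∀ x, 0 ≤ P x) (hQ : ∀ x y, 0 ≤ Q x y) (hR : ∀ y, R y ≠ 0) :
    mutualInfo b P Q + relEntropy b (outputDist P Q) R = ∑ x, P x * relEntropy b (Q x) R := by
  rw [relEntropy_outputDist, mutualInfo, ← sum_add_distrib]
  refine sum_congr rfl fun x _ => ?_
  rw [relEntropy, mul_sum, ← sum_add_distrib]
  refine sum_congr rfl fun y _ => mul_logb_div_add_mul_logb_div b (hP x) (hQ x y) ?_ (hR y)
  exact single_le_sum (f := fun x' => P x' * Q x' y)
    (fun x' _ => mul_nonneg (hP x') (hQ x' y)) (mem_univ x)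

end DiscreteChannel

section Mediant

variable {ι : Type*}

theorem sum_mul_div_sum_mul_le {s : Finset ι} {P f k : ι → ℝ} {M : ℝ}
    (hP : ∀ x ∈ s, 0 ≤ P x) (hfk : ∀ x ∈ s, f x ≤ M * k x) (hk : 0 < ∑ x ∈ s, P x * k x) :
    (∑ x ∈ s, P x * f x) / ∑ x ∈ s, P x * k x ≤ M := by
  rw [div_le_iff₀ hk, mul_sum]
  refine sum_le_sum fun x hx => ?_
  calc P x * f x ≤ P x * (M * k x) := mul_le_mul_of_nonneg_left (hfk x hx) (hP x hx)
    _ = M * (P x * k x) := by ring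

theorem isGreatest_expectation_ratio [Fintype ι] [DecidableEq ι] (f k : ι → ℝ) {c : ℝ}
    (hc : 0 < c) {s : Finset ι} (hs : s.Nonempty) (hk : ∀ x ∈ s, 0 < k x)
    (hout : ∀ x ∉ s, k x = 0 ∧ f x ≤ 0) :
    IsGreatest {r : ℝ | ∃ P : ι → ℝ, (∀ x, 0 ≤ P x) ∧ (∑ x, P x = 1) ∧
        0 < ∑ x, P x * k x ∧ r = (∑ x, P x * f x) / (c * ∑ x, P x * k x)}
      (1 / c * s.sup' hs fun x => f x / k x) := by
  obtain ⟨x₀, hx₀, hM⟩ := exists_mem_eq_sup' hs fun x => f x / k x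
  set M := s.sup' hs fun x => f x / k x
  constructor
  · have hk₀ := hk x₀ hx₀
    refine ⟨fun x => if x = x₀ then 1 else 0, fun x => by positivity, by simp, by simpa, ?_⟩
    simp only [ite_mul, one_mul, zero_mul, sum_ite_eq', mem_univ, if_true]
    rw [hM]
    field_simp
  · rintro r ⟨P, hP, -, hPk, rfl⟩
    have hfk : ∀ x, f x ≤ M * k x := fun x => by
      by_cases hx : x ∈ s
      · exact (div_le_iff₀ (hk x hx)).1 (le_sup' (fun x => f x / k x) hx)
      · obtain ⟨hkx, hfx⟩ := hout x hx
        simpa [hkx] using hfx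
    rw [div_mul_eq_div_div_swap, one_div_mul_eq_div]
    exact div_le_div_of_nonneg_right
      (sum_mul_div_sum_mul_le (fun x _ => hP x) (fun x _ => hfk x) hPk) hc.le

end Mediant

open DiscreteChannel in
theorem zero_cost_capacity_formula_general
    {X Y : Type*} [Fintype X] [Fintype Y] [DecidableEq X]
    (Q : X → Y → ℝ) (star : X)
    (hQ0 : ∀ x y, 0 ≤ Q x y)
    (hstar : ∀ y, 0 < Q star y)
    (k : X → ℝ) (hkstar : k star = 0) (hkpos : ∀ x, x ≠ star → 0 < k x)
    (β : ℝ) (hβ : 0 ≤ β)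
    (hne : (Finset.univ.filter (fun x => x ≠ star)).Nonempty) :
    IsGreatest
      {r : ℝ | ∃ P : X → ℝ, (∀ x, 0 ≤ P x) ∧ (∑ x, P x = 1) ∧
        0 < ∑ x, P x * k x ∧
        r = ((∑ x, ∑ y, P x * Q x y *
              Real.logb 2 (P x * Q x y / (P x * (∑ x', P x' * Q x' y)))) +
            (∑ y, (∑ x', P x' * Q x' y) *
              Real.logb 2 ((∑ x', P x' * Q x' y) / Q star y))) /
          ((1 + β) * ∑ x, P x * k x)}
      ((1 / (1 + β)) *
        (Finset.univ.filter (fun x => x ≠ star)).sup' hne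
          (fun x => (∑ y, Q x y * Real.logb 2 (Q x y / Q star y)) / k x)) := by
  have hD (P : X → ℝ) (hP : ∀ x, 0 ≤ P x) :=
    mutualInfo_add_relEntropy_outputDist 2 hP hQ0 fun y => (hstar y).ne'
  have hratio := isGreatest_expectation_ratio (fun x => relEntropy 2 (Q x) (Q star)) k
    (by linarith : (0 : ℝ) < 1 + β) hne (fun x hx => hkpos x (mem_filter.1 hx).2)
    fun x hx => by
      obtain rfl : x = star := by simpa using hx
      exact ⟨hkstar, (relEntropy_self 2 (Q x)).le⟩
  convert hratio using 1
  · ext r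
    refine exists_congr fun P => and_congr_right fun hP => ?_
    simp only [← hD P hP]
    rfl
  · rfl

/-- Zero-cost-symbol case: the maximum over input distributions `P` with
positive expected cost of `(I(P,Q) + D(P_Y ∥ Q(·|⋆))) / ((1+β) E_P[k])` equals
`(1/(1+β)) max_{x ≠ ⋆} D(Q(·|x) ∥ Q(·|⋆)) / k(x)`. -/
theorem zero_cost_capacity_formula
    {X Y : Type*} [Fintype X] [Fintype Y] [DecidableEq X]
    (Q : X → Y → ℝ) (star : X)
    (hQ0 : ∀ x y, 0 ≤ Q x y) (hQ1 : ∀ x, ∑ y, Q x y = 1)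
    (hstar : ∀ y, 0 < Q star y)
    (k : X → ℝ) (hkstar : k star = 0) (hkpos : ∀ x, x ≠ star → 0 < k x)
    (β : ℝ) (hβ : 0 ≤ β)
    (hne : (Finset.univ.filter (fun x => x ≠ star)).Nonempty) :
    IsGreatest
      {r : ℝ | ∃ P : X → ℝ, (∀ x, 0 ≤ P x) ∧ (∑ x, P x = 1) ∧
        0 < ∑ x, P x * k x ∧
        r = ((∑ x, ∑ y, P x * Q x y *
              Real.logb 2 (P x * Q x y / (P x * (∑ x', P x' * Q x' y)))) +
            (∑ y, (∑ x', P x' * Q x' y) *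
              Real.logb 2 ((∑ x', P x' * Q x' y) / Q star y))) /
          ((1 + β) * ∑ x, P x * k x)}
      ((1 / (1 + β)) *
        (Finset.univ.filter (fun x => x ≠ star)).sup' hne
          (fun x => (∑ y, Q x y * Real.logb 2 (Q x y / Q star y)) / k x)) :=
  zero_cost_capacity_formula_general Q star hQ0 hstar k hkstar hkpos β hβ hne
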